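/- arXiv:1908.06774 — 3 statements merged into one kernel-verified Lean document; each statement's English description precedes it below -/
import Mathlib

section
/- Let q : ℝ → ℂ be a continuous 1-periodic function and let p ∈ [1, ∞). Then lim_{λ → 0⁺} ∫_ℝ λ^{1/2} |q(x)|^p e^{−pλx²} dx = √(π/p) · ∫₀¹ |q(x)|^p dx. Consequently, for q_λ(x) := λ^{1/(2p)} q(x) e^{−λx²} one has ‖q_λ‖_{L^p(ℝ)} → (π/p)^{1/(2p)} ‖q‖_{L^p(0,1)} as λ → 0⁺. -/
/-!
Write `f = c + g` with `c` the mean of `f` over a period. The constant contributes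
`c ∫ e^{-bλx²} dx = c √(π/(bλ))` exactly. The mean-zero part `g` has a bounded periodic primitive
`G`, and integrating by parts against the Gaussian bounds `|∫ g e^{-βx²}|` by
`sup |G| · ∫ |d/dx e^{-βx²}| = 2 sup |G|` uniformly in `β`, so after multiplying by `√λ` it
vanishes as `λ → 0⁺`. The theorem is the case `f = |q|^p`, `b = p`, and its `1/p`-th power.
-/

open MeasureTheory Filter Real
open scoped Topology

theorem integral_abs_mul_exp_neg_mul_sq {b : ℝ} (hb : 0 < b) :
    ∫ x, |x| * exp (-b * x ^ 2) = b⁻¹ := by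
  have hIoi := integral_rpow_mul_exp_neg_mul_rpow two_pos (by norm_num : (-1 : ℝ) < 1) hb
  norm_num [Gamma_one, rpow_neg_one] at hIoi
  have habs := integral_comp_abs (f := fun x => x * exp (-b * x ^ 2))
  simp only [sq_abs, neg_mul] at habs hIoi ⊢
  rw [habs, hIoi]
  field_simp

theorem integrable_abs_mul_exp_neg_mul_sq {b : ℝ} (hb : 0 < b) :
    Integrable fun x : ℝ => |x| * exp (-b * x ^ 2) :=
  (integrable_mul_exp_neg_mul_sq hb).norm.congr <| Eventually.of_forall fun x => by
    simp [abs_of_pos (exp_pos _)]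

theorem abs_integral_mul_exp_neg_mul_sq_le {g G : ℝ → ℝ} {M b : ℝ}
    (hG : ∀ x, HasDerivAt G (g x) x) (hGM : ∀ x, |G x| ≤ M) (hb : 0 < b) :
    |∫ x, g x * exp (-b * x ^ 2)| ≤ 2 * M := by
  have hM : 0 ≤ M := (abs_nonneg _).trans (hGM 0)
  by_cases hgi : Integrable (fun x => g x * exp (-b * x ^ 2))
  swap
  · rw [integral_undef hgi, abs_zero]
    positivity
  have hGc : Continuous G := continuous_iff_continuousAt.2 fun x => (hG x).continuousAt
  have hv : ∀ x, HasDerivAt (fun x => exp (-b * x ^ 2)) (-(2 * b) * (x * exp (-b * x ^ 2))) x :=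
    fun x => by
      convert ((hasDerivAt_pow 2 x).const_mul (-b)).exp using 1
      ring
  have hGmul : ∀ {φ : ℝ → ℝ}, Integrable φ → Integrable (fun x => G x * φ x) := fun h =>
    h.bdd_mul hGc.aestronglyMeasurable (Eventually.of_forall hGM)
  have ibp := integral_mul_deriv_eq_deriv_mul_of_integrable (fun x _ => hG x) (fun x _ => hv x)
    (hGmul ((integrable_mul_exp_neg_mul_sq hb).const_mul _)) hgi
    (hGmul (integrable_exp_neg_mul_sq hb))
  calc |∫ x, g x * exp (-b * x ^ 2)|
      = ‖∫ x, G x * (-(2 * b) * (x * exp (-b * x ^ 2)))‖ := by rw [ibp, norm_neg, norm_eq_abs]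
    _ ≤ ∫ x, M * (2 * b) * (|x| * exp (-b * x ^ 2)) := by
      refine norm_integral_le_of_norm_le
        ((integrable_abs_mul_exp_neg_mul_sq hb).const_mul _) (Eventually.of_forall fun x => ?_)
      rw [norm_mul, norm_mul, norm_mul, norm_neg, norm_of_nonneg (exp_pos _).le,
        norm_of_nonneg (by positivity : 0 ≤ 2 * b), norm_eq_abs, norm_eq_abs, ← mul_assoc]
      gcongr
      exact hGM x
    _ = 2 * M := by
      rw [integral_const_mul, integral_abs_mul_exp_neg_mul_sq hb]
      field_simp

namespace Function.Periodic

variable {f : ℝ → ℝ} {T : ℝ}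

theorem exists_abs_le_of_continuous (hf : Continuous f) (hper : Periodic f T) (hT : T ≠ 0) :
    ∃ M, ∀ x, |f x| ≤ M := by
  obtain ⟨M, hM⟩ := isBounded_iff_forall_norm_le.1 (hper.isBounded_of_continuous hT hf)
  exact ⟨M, fun x => hM _ ⟨x, rfl⟩⟩

theorem intervalIntegral_periodic_of_integral_eq_zero (hper : Periodic f T)
    (h_int : ∀ t₁ t₂, IntervalIntegrable f volume t₁ t₂) (h0 : ∫ t in 0..T, f t = 0) :
    Periodic (fun x => ∫ t in 0..x, f t) T := fun x => by
  simp only [hper.intervalIntegral_add_eq_add 0 x h_int, zero_add, h0, add_zero]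

theorem exists_forall_abs_integral_sub_mean_mul_exp_neg_mul_sq_le (hf : Continuous f)
    (hper : Periodic f T) (hT : T ≠ 0) :
    ∃ M, ∀ b > 0, |∫ x, (f x - T⁻¹ * ∫ t in 0..T, f t) * exp (-b * x ^ 2)| ≤ M := by
  set g := fun x => f x - T⁻¹ * ∫ t in 0..T, f t
  have hg : Continuous g := by fun_prop
  have hgper : Periodic g T := fun x => by simp only [g, hper x]
  have hg0 : ∫ t in 0..T, g t = 0 := by
    rw [intervalIntegral.integral_sub (hf.intervalIntegrable _ _) intervalIntegrable_const]
    simp [hT]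
  have hG : ∀ x, HasDerivAt (fun x => ∫ t in 0..x, g t) (g x) x := fun x =>
    (hg.integral_hasStrictDerivAt 0 x).hasDerivAt
  obtain ⟨M, hM⟩ := exists_abs_le_of_continuous
    (continuous_iff_continuousAt.2 fun x => (hG x).continuousAt)
    (hgper.intervalIntegral_periodic_of_integral_eq_zero hg.intervalIntegrable hg0) hT
  exact ⟨2 * M, fun b hb => abs_integral_mul_exp_neg_mul_sq_le hG hM hb⟩

theorem tendsto_sqrt_mul_integral_mul_exp_neg_mul_sq (hf : Continuous f) (hper : Periodic f T)
    (hT : T ≠ 0) {b : ℝ} (hb : 0 < b) :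
    Tendsto (fun lam => √lam * ∫ x, f x * exp (-(b * lam) * x ^ 2)) (𝓝[>] 0)
      (𝓝 (√(π / b) * (T⁻¹ * ∫ t in 0..T, f t))) := by
  set c := T⁻¹ * ∫ t in 0..T, f t
  obtain ⟨M, hM⟩ := hper.exists_forall_abs_integral_sub_mean_mul_exp_neg_mul_sq_le hf hT
  obtain ⟨C, hC⟩ := hper.exists_abs_le_of_continuous hf hT
  have hsplit : ∀ lam > 0, √lam * ∫ x, f x * exp (-(b * lam) * x ^ 2) =
      √(π / b) * c + √lam * ∫ x, (f x - c) * exp (-(b * lam) * x ^ 2) := by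
    intro lam hlam
    have he := integrable_exp_neg_mul_sq (mul_pos hb hlam)
    have hscale : √lam * √(π / (b * lam)) = √(π / b) := by
      rw [← sqrt_mul hlam.le]
      congr 1
      field_simp
    simp_rw [sub_mul]
    rw [integral_sub (he.bdd_mul hf.aestronglyMeasurable (Eventually.of_forall hC))
      (he.const_mul c), integral_const_mul, integral_gaussian, ← hscale]
    ring
  have hsqrt : Tendsto (fun lam => √lam * M) (𝓝[>] 0) (𝓝 0) := by
    simpa using (continuous_sqrt.tendsto 0).mono_left nhdsWithin_le_nhds |>.mul_const M
  have herr : Tendsto (fun lam => √lam * ∫ x, (f x - c) * exp (-(b * lam) * x ^ 2)) (𝓝[>] 0)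
      (𝓝 0) := by
    refine squeeze_zero_norm' ?_ hsqrt
    filter_upwards [self_mem_nhdsWithin] with lam hlam
    rw [norm_mul, norm_of_nonneg (sqrt_nonneg _), norm_eq_abs]
    exact mul_le_mul_of_nonneg_left (hM _ (mul_pos hb hlam)) (sqrt_nonneg _)
  have hlim := (tendsto_const_nhds (x := √(π / b) * c)).add herr
  rw [add_zero] at hlim
  refine hlim.congr' ?_
  filter_upwards [self_mem_nhdsWithin] with lam hlam using (hsplit lam hlam).symm

end Function.Periodic

/-- Gaussian-damped `L^p` norms of a continuous `1`-periodic function converge, as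
`λ → 0⁺`, to the corresponding `L^p` norm over one period:
`∫_ℝ λ^{1/2}|q(x)|^p e^{-pλx²} dx → √(π/p) ∫₀¹ |q(x)|^p dx`, and consequently
`‖q_λ‖_{L^p(ℝ)} → (π/p)^{1/(2p)} ‖q‖_{L^p(0,1)}` for `q_λ(x) = λ^{1/(2p)} q(x) e^{-λx²}`. -/
theorem gaussian_damped_periodic_Lp_limit
    (q : ℝ → ℂ) (hq : Continuous q) (hper : ∀ x : ℝ, q (x + 1) = q x)
    (p : ℝ) (hp : 1 ≤ p) :
    Tendsto (fun lam : ℝ =>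
        ∫ x : ℝ, lam ^ ((1 : ℝ) / 2) * ‖q x‖ ^ p * Real.exp (-(p * lam * x ^ 2)))
      (𝓝[>] 0)
      (𝓝 (Real.sqrt (Real.pi / p) * ∫ x in (0 : ℝ)..1, ‖q x‖ ^ p)) ∧
    Tendsto (fun lam : ℝ =>
        (∫ x : ℝ, ‖(↑(lam ^ (1 / (2 * p))) : ℂ) * q x * (↑(Real.exp (-(lam * x ^ 2))) : ℂ)‖ ^ p)
          ^ (1 / p))
      (𝓝[>] 0)
      (𝓝 ((Real.pi / p) ^ (1 / (2 * p)) * (∫ x in (0 : ℝ)..1, ‖q x‖ ^ p) ^ (1 / p))) := by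
  have hp0 : 0 < p := by linarith
  have hlim := Function.Periodic.tendsto_sqrt_mul_integral_mul_exp_neg_mul_sq
    (f := fun x => ‖q x‖ ^ p) (by fun_prop (disch := positivity))
    (fun x => congrArg (‖·‖ ^ p) (hper x)) one_ne_zero hp0
  rw [inv_one, one_mul] at hlim
  refine (fun h1 => ⟨h1, ?_⟩) <| hlim.congr' <| eventually_nhdsWithin_of_forall fun lam _ => by
    rw [← integral_const_mul]
    congr 1 with x
    rw [sqrt_eq_rpow]
    ring_nf
  have h2 := h1.rpow_const (p := 1 / p) (Or.inr (by positivity))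
  have hmean : 0 ≤ ∫ x in (0 : ℝ)..1, ‖q x‖ ^ p :=
    intervalIntegral.integral_nonneg zero_le_one fun x _ => by positivity
  rw [mul_rpow (sqrt_nonneg _) hmean, sqrt_eq_rpow, ← rpow_mul (by positivity),
    one_div_mul_one_div] at h2
  refine h2.congr' <| eventually_nhdsWithin_of_forall fun lam (hlam : 0 < lam) => ?_
  congr 2 with x
  rw [norm_mul, norm_mul, Complex.norm_real, Complex.norm_real, norm_of_nonneg (by positivity),
    norm_of_nonneg (exp_pos _).le, mul_rpow (by positivity) (exp_pos _).le,
    mul_rpow (by positivity) (norm_nonneg _), ← rpow_mul hlam.le, ← exp_mul]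
  congr 2
  · field_simp
  · ring
end

section
/- (Failure of the upper majorant property transfers from the torus to the line.) Let p ∈ (2, ∞). Suppose there exist trigonometric polynomials q(x) = Σ_{|k| ≤ K} a_k e^{2πikx} and Q(x) = Σ_{|k| ≤ K} b_k e^{2πikx} with b_k ≥ 0 and |a_k| ≤ b_k for all k, such that ‖q‖_{L^p(0,1)} > ‖Q‖_{L^p(0,1)}. Then there exist Schwartz functions f, g : ℝ → ℂ with |f̂(ξ)| ≤ ĝ(ξ) for all ξ ∈ ℝ and ‖f‖_{L^p(ℝ)} > ‖g‖_{L^p(ℝ)}. In particular, f and g can be taken of the form f(x) = q(x) e^{−λx²}, g(x) = Q(x) e^{−λx²} for all sufficiently small λ > 0. -/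
/-!
A 1-periodic function `F` multiplied by `e^{-ax²}` has integral `≈ √(π/a) · ∫₀¹ F` as `a → 0`.
For `D = |q|^p - |Q|^p`, of mean `Δ > 0`, comparing the weight on each `[i, i + 1]` with its
value at `i + 1` gives `∫_ℝ D e^{-ax²} ≥ 2Δ ∑_{i<n} e^{-a(i+1)²} - sup |D(x) + D(-x)|`, which is
positive for `n` large and then `a` small; take `a = λp`. On the Fourier side
`f̂(ξ) = ∑ a_k ĝ_λ(ξ - k)` with `ĝ_λ > 0` the transform of the Gaussian, so `|a_k| ≤ b_k`
bounds `|f̂|` by `ĝ` termwise.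
-/

open MeasureTheory Complex SchwartzMap Real
open scoped FourierTransform Nat Topology

noncomputable section

lemma abs_pow_mul_exp_neg_sq_div_two_le (i : ℕ) (x : ℝ) :
    |x| ^ i * Real.exp (-(x ^ 2 / 2)) ≤ i ! * Real.exp (1 / 2) := by
  have hpow : |x| ^ i ≤ i ! * Real.exp |x| := by
    have := Real.pow_div_factorial_le_exp (x := |x|) (abs_nonneg x) i
    rwa [div_le_iff₀ (by positivity), mul_comm] at this
  have hexp : Real.exp |x| * Real.exp (-(x ^ 2 / 2)) ≤ Real.exp (1 / 2) := by
    rw [← Real.exp_add, Real.exp_le_exp]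
    nlinarith [sq_nonneg (|x| - 1), sq_abs x]
  calc |x| ^ i * Real.exp (-(x ^ 2 / 2))
      ≤ i ! * Real.exp |x| * Real.exp (-(x ^ 2 / 2)) := by gcongr
    _ ≤ i ! * Real.exp (1 / 2) := by rw [mul_assoc]; gcongr

lemma Polynomial.exists_abs_eval_mul_exp_neg_sq_div_two_le (P : Polynomial ℝ) :
    ∃ C, ∀ x : ℝ, |P.eval x| * Real.exp (-(x ^ 2 / 2)) ≤ C := by
  refine ⟨∑ i ∈ Finset.range (P.natDegree + 1), |P.coeff i| * (i ! * Real.exp (1 / 2)),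
    fun x => ?_⟩
  rw [P.eval_eq_sum_range]
  grw [Finset.abs_sum_le_sum_abs, Finset.sum_mul]
  refine Finset.sum_le_sum fun i _ => ?_
  rw [abs_mul, abs_pow, mul_assoc]
  exact mul_le_mul_of_nonneg_left (abs_pow_mul_exp_neg_sq_div_two_le i x) (abs_nonneg _)

def gaussianSchwartz : 𝓢(ℝ, ℝ) where
  toFun x := Real.exp (-(x ^ 2 / 2))
  smooth' := by fun_prop
  decay' k n := by
    obtain ⟨C, hC⟩ := Polynomial.exists_abs_eval_mul_exp_neg_sq_div_two_le
      (Polynomial.X ^ k * (Polynomial.hermite n).map (Int.castRingHom ℝ))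
    refine ⟨C, fun x => le_of_eq_of_le ?_ (hC x)⟩
    rw [norm_iteratedFDeriv_eq_norm_iteratedDeriv, iteratedDeriv_eq_iterate,
      Polynomial.deriv_gaussian_eq_hermite_mul_gaussian]
    simp [abs_mul, Polynomial.eval_map, Polynomial.aeval_def, mul_assoc]

lemma gaussianSchwartz_apply (x : ℝ) : gaussianSchwartz x = Real.exp (-(x ^ 2 / 2)) := rfl

lemma exists_schwartzMap_eq_mul_gaussian {h : ℝ → ℂ} (hh : h.HasTemperateGrowth) {lam : ℝ}
    (hlam : 0 < lam) : ∃ f : 𝓢(ℝ, ℂ), ∀ x, f x = h x * (Real.exp (-(lam * x ^ 2)) : ℂ) := by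
  let dilation : ℝ ≃L[ℝ] ℝ :=
    (LinearEquiv.smulOfNeZero ℝ ℝ √(2 * lam) (by positivity)).toContinuousLinearEquiv
  refine ⟨bilinLeftCLM (ContinuousLinearMap.lsmul ℝ ℝ) hh
    (compCLMOfContinuousLinearEquiv ℝ dilation gaussianSchwartz), fun x => ?_⟩
  have hsq : (√(2 * lam) * x) ^ 2 / 2 = lam * x ^ 2 := by
    rw [mul_pow, Real.sq_sqrt (by positivity)]; ring
  simp only [bilinLeftCLM_apply, compCLMOfContinuousLinearEquiv_apply, Function.comp_apply,
    ContinuousLinearMap.lsmul_apply, gaussianSchwartz_apply, Complex.real_smul]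
  rw [show dilation x = √(2 * lam) * x from rfl, hsq, mul_comm]

lemma iteratedDeriv_cexp_mul_ofReal (μ : ℂ) (n : ℕ) :
    iteratedDeriv n (fun x : ℝ => cexp (μ * x)) = fun x : ℝ => μ ^ n * cexp (μ * x) := by
  induction n with
  | zero => simp
  | succ n ih =>
    ext x
    have hderiv :
        HasDerivAt (fun x : ℝ => μ ^ n * cexp (μ * x)) (μ ^ n * (cexp (μ * x) * μ)) x :=
      (((hasDerivAt_id x).ofReal_comp.const_mul μ).cexp.const_mul _).congr_deriv (by simp)
    rw [iteratedDeriv_succ, ih, hderiv.deriv, pow_succ]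
    ring

lemma hasTemperateGrowth_cexp_ofReal_mul_I (t : ℝ) :
    (fun x : ℝ => cexp (((t * x : ℝ) : ℂ) * I)).HasTemperateGrowth := by
  have hfun :
      (fun x : ℝ => cexp (((t * x : ℝ) : ℂ) * I)) = fun x : ℝ => cexp (t * I * x) := by
    ext x; push_cast; ring_nf
  rw [hfun]
  refine ⟨(contDiff_const.mul ofRealCLM.contDiff).cexp, fun n => ⟨0, |t| ^ n, fun x => ?_⟩⟩
  simp [norm_iteratedFDeriv_eq_norm_iteratedDeriv, iteratedDeriv_cexp_mul_ofReal, norm_exp]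

def trigPoly (c : ℤ → ℂ) (s : Finset ℤ) (x : ℝ) : ℂ :=
  ∑ k ∈ s, c k * cexp (((2 * π * (k : ℝ) * x : ℝ) : ℂ) * I)

section TrigPoly

variable (c : ℤ → ℂ) (s : Finset ℤ)

lemma trigPoly_hasTemperateGrowth : (trigPoly c s).HasTemperateGrowth :=
  Function.HasTemperateGrowth.sum fun k _ =>
    (Function.HasTemperateGrowth.const (c k)).mul (hasTemperateGrowth_cexp_ofReal_mul_I _)

lemma trigPoly_periodic : Function.Periodic (trigPoly c s) 1 := fun x => by
  refine Finset.sum_congr rfl fun k _ => ?_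
  have hshift : ((2 * π * (k : ℝ) * (x + 1) : ℝ) : ℂ) * I
      = ((2 * π * (k : ℝ) * x : ℝ) : ℂ) * I + k * (2 * π * I) := by push_cast; ring
  rw [hshift, Complex.exp_add, Complex.exp_int_mul_two_pi_mul_I, mul_one]

variable {lam : ℝ}

lemma fourier_trigPoly_mul_gaussian (hlam : 0 < lam) (ξ : ℝ) :
    𝓕 (fun x => trigPoly c s x * (Real.exp (-(lam * x ^ 2)) : ℂ)) ξ
      = ∑ k ∈ s, c k * ((√(π / lam) * Real.exp (-(π ^ 2 * (ξ - k) ^ 2 / lam)) : ℝ) : ℂ) := by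
  have hb : 0 < (lam : ℂ).re := by simpa using hlam
  have hterm : ∀ (k : ℤ) (x : ℝ),
      c k * (cexp (I * ↑(2 * π * -(ξ - k)) * x) * cexp (-lam * x ^ 2))
        = cexp (((-2 * π * x * ξ : ℝ) : ℂ) * I) * (c k
          * cexp (((2 * π * (k : ℝ) * x : ℝ) : ℂ) * I) * (Real.exp (-(lam * x ^ 2)) : ℂ)) := by
    intro k x
    simp only [ofReal_exp, mul_assoc, mul_left_comm _ (c k), ← Complex.exp_add]
    congr 2
    push_cast
    ring
  have hint : ∀ k : ℤ,
      Integrable fun x : ℝ => c k * (cexp (I * ↑(2 * π * -(ξ - k)) * x) * cexp (-lam * x ^ 2)) :=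
    fun k => ((integrable_cexp_neg_mul_sq hb).bdd_mul (c := 1) (by fun_prop)
      (ae_of_all _ fun x => by simp [norm_exp])).const_mul (c k)
  have hvalue : ∀ u : ℝ,
      (π / (lam : ℂ)) ^ (1 / 2 : ℂ) * cexp (-(↑(2 * π * u)) ^ 2 / (4 * lam))
        = ((√(π / lam) * Real.exp (-(π ^ 2 * u ^ 2 / lam)) : ℝ) : ℂ) := by
    intro u
    have hsqrt : ((√(π / lam) : ℝ) : ℂ) = (π / (lam : ℂ)) ^ (1 / 2 : ℂ) := by
      rw [Real.sqrt_eq_rpow, ofReal_cpow (by positivity)]; push_cast; rfl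
    rw [ofReal_mul √(π / lam), hsqrt, ofReal_exp]
    congr 2
    push_cast
    field_simp
    ring
  rw [fourier_real_eq_integral_exp_smul]
  simp_rw [trigPoly, Finset.sum_mul, smul_eq_mul, Finset.mul_sum, ← hterm]
  rw [integral_finsetSum _ fun k _ => hint k]
  refine Finset.sum_congr rfl fun k _ => ?_
  rw [integral_const_mul, fourierIntegral_gaussian hb, hvalue, neg_sq]

lemma norm_fourier_trigPoly_mul_gaussian_le {a : ℤ → ℂ} {b : ℤ → ℝ} (hab : ∀ k, ‖a k‖ ≤ b k)
    (hlam : 0 < lam) (ξ : ℝ) :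
    ‖𝓕 (fun x => trigPoly a s x * (Real.exp (-(lam * x ^ 2)) : ℂ)) ξ‖
        ≤ (𝓕 (fun x => trigPoly (fun k => (b k : ℂ)) s x
            * (Real.exp (-(lam * x ^ 2)) : ℂ)) ξ).re ∧
      (𝓕 (fun x => trigPoly (fun k => (b k : ℂ)) s x
          * (Real.exp (-(lam * x ^ 2)) : ℂ)) ξ).im = 0 := by
  set G : ℤ → ℝ := fun k => √(π / lam) * Real.exp (-(π ^ 2 * (ξ - k) ^ 2 / lam))
  have hG : ∀ k, 0 ≤ G k := fun k => by positivity
  rw [fourier_trigPoly_mul_gaussian _ _ hlam, fourier_trigPoly_mul_gaussian _ _ hlam]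
  simp_rw [← ofReal_mul, ← ofReal_sum, ofReal_re, ofReal_im]
  refine ⟨(norm_sum_le _ _).trans (Finset.sum_le_sum fun k _ => ?_), trivial⟩
  rw [norm_mul, norm_real, Real.norm_of_nonneg (hG k)]
  exact mul_le_mul_of_nonneg_right (hab k) (hG k)

end TrigPoly

lemma integral_eq_integral_Ioi_add_comp_neg {E : Type*} [NormedAddCommGroup E] [NormedSpace ℝ E]
    {f : ℝ → E} (hf : Integrable f) : ∫ x, f x = ∫ x in Set.Ioi 0, (f x + f (-x)) := by
  rw [integral_add hf.integrableOn hf.comp_neg.integrableOn, integral_comp_neg_Ioi, neg_zero,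
    add_comm, intervalIntegral.integral_Iic_add_Ioi hf.integrableOn hf.integrableOn]

lemma antitoneOn_exp_neg_mul_sq {a : ℝ} (ha : 0 ≤ a) :
    AntitoneOn (fun x => Real.exp (-a * x ^ 2)) (Set.Ici 0) := fun x hx y _ hxy =>
  Real.exp_le_exp.mpr <| by
    have := mul_le_mul_of_nonneg_left (pow_le_pow_left₀ (Set.mem_Ici.mp hx) hxy 2) ha
    linarith

section Periodic

variable {D : ℝ → ℝ} {M : ℝ}

lemma Function.Periodic.intervalIntegral_comp_neg (hper : Function.Periodic D 1) :
    ∫ x in (0 : ℝ)..1, D (-x) = ∫ x in (0 : ℝ)..1, D x := by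
  simpa using hper.intervalIntegral_add_eq (-1) 0

lemma Function.Periodic.exists_abs_le (hper : Function.Periodic D 1)
    (hD : Continuous D) : ∃ M, ∀ x, |D x| ≤ M := by
  obtain ⟨M, hM⟩ := (hper.isBounded_of_continuous one_ne_zero hD).exists_norm_le
  exact ⟨M, fun x => hM _ (Set.mem_range_self x)⟩

lemma Function.Periodic.integrable_mul_gaussian (hper : Function.Periodic D 1)
    (hD : Continuous D) {a : ℝ} (ha : 0 < a) : Integrable fun x => D x * Real.exp (-a * x ^ 2) := by
  obtain ⟨C, hC⟩ := hper.exists_abs_le hD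
  exact (integrable_exp_neg_mul_sq ha).bdd_mul hD.aestronglyMeasurable (ae_of_all _ hC)

lemma Function.Periodic.le_intervalIntegral_mul_of_antitoneOn (hper : Function.Periodic D 1)
    (hD : Continuous D) (hM : ∀ x, |D x| ≤ M) {w : ℝ → ℝ} (hw : Continuous w) {t : ℝ}
    (hanti : AntitoneOn w (Set.Icc t (t + 1))) :
    (∫ x in (0 : ℝ)..1, D x) * w (t + 1) - M * (w t - w (t + 1))
      ≤ ∫ x in t..t + 1, D x * w x := by
  have hM0 : 0 ≤ M := (abs_nonneg _).trans (hM 0)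
  have hmean : ∫ x in t..t + 1, D x = ∫ x in (0 : ℝ)..1, D x := by
    simpa using hper.intervalIntegral_add_eq t 0
  have hsplit : ∫ x in t..t + 1, D x * w x
      = (∫ x in t..t + 1, D x) * w (t + 1) + ∫ x in t..t + 1, D x * (w x - w (t + 1)) := by
    rw [← intervalIntegral.integral_mul_const, ← intervalIntegral.integral_add
      ((by fun_prop : Continuous fun x => D x * w (t + 1)).intervalIntegrable _ _)
      ((by fun_prop : Continuous fun x => D x * (w x - w (t + 1))).intervalIntegrable _ _)]
    congr 1 with x
    ring
  have hbound :
      ∀ x ∈ Set.uIoc t (t + 1), ‖D x * (w x - w (t + 1))‖ ≤ M * (w t - w (t + 1)) := by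
    intro x hx
    rw [Set.uIoc_of_le (by linarith)] at hx
    have hx' : x ∈ Set.Icc t (t + 1) := Set.Ioc_subset_Icc_self hx
    have hlow : w (t + 1) ≤ w x := hanti hx' (Set.right_mem_Icc.mpr (by linarith)) hx.2
    have hup : w x ≤ w t := hanti (Set.left_mem_Icc.mpr (by linarith)) hx' hx.1.le
    rw [norm_mul, Real.norm_eq_abs, Real.norm_of_nonneg (sub_nonneg.mpr hlow)]
    exact mul_le_mul (hM x) (by linarith) (sub_nonneg.mpr hlow) hM0
  have herr := intervalIntegral.norm_integral_le_of_norm_le_const hbound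
  rw [add_sub_cancel_left, abs_of_pos (by linarith), mul_one, Real.norm_eq_abs] at herr
  rw [hsplit, hmean]
  linarith [neg_abs_le (∫ x in t..t + 1, D x * (w x - w (t + 1)))]

lemma Function.Periodic.le_integral_Ioi_mul_of_antitoneOn (hper : Function.Periodic D 1)
    (hD : Continuous D) (hM : ∀ x, |D x| ≤ M) (hmean : 0 ≤ ∫ x in (0 : ℝ)..1, D x)
    {w : ℝ → ℝ} (hw : Continuous w) (hanti : AntitoneOn w (Set.Ici 0)) (hw0 : ∀ x, 0 ≤ w x)
    (hint : IntegrableOn (fun x => D x * w x) (Set.Ioi 0)) (n : ℕ) :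
    (∫ x in (0 : ℝ)..1, D x) * ∑ i ∈ Finset.range n, w (i + 1) - M * w 0
      ≤ ∫ x in Set.Ioi 0, D x * w x := by
  have hM0 : 0 ≤ M := (abs_nonneg _).trans (hM 0)
  set Δ := ∫ x in (0 : ℝ)..1, D x
  refine ge_of_tendsto (intervalIntegral_tendsto_integral_Ioi 0 hint tendsto_natCast_atTop_atTop)
    (Filter.eventually_atTop.mpr ⟨n, fun k hk => ?_⟩)
  have hpieces : ∀ i : ℕ, Δ * w (i + 1) - M * (w i - w (i + 1))
      ≤ ∫ x in (i : ℝ)..(i + 1 : ℕ), D x * w x := fun i => by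
    push_cast
    exact hper.le_intervalIntegral_mul_of_antitoneOn hD hM hw
      (hanti.mono (Set.Icc_subset_Ici_self.trans (Set.Ici_subset_Ici.mpr (Nat.cast_nonneg i))))
  have htelescope : ∑ i ∈ Finset.range k, (w i - w (i + 1)) = w 0 - w k := by
    simpa using Finset.sum_range_sub' (fun i : ℕ => w i) k
  have hsum_mono : ∑ i ∈ Finset.range n, w (i + 1) ≤ ∑ i ∈ Finset.range k, w (i + 1) :=
    Finset.sum_le_sum_of_subset_of_nonneg (Finset.range_subset_range.mpr hk)
      fun i _ _ => hw0 _
  calc Δ * ∑ i ∈ Finset.range n, w (i + 1) - M * w 0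
      ≤ Δ * ∑ i ∈ Finset.range k, w (i + 1) - M * (w 0 - w k) := by
        have := mul_le_mul_of_nonneg_left hsum_mono hmean
        nlinarith [hw0 k]
    _ = ∑ i ∈ Finset.range k, (Δ * w (i + 1) - M * (w i - w (i + 1))) := by
        rw [Finset.sum_sub_distrib, ← Finset.mul_sum, ← Finset.mul_sum, htelescope]
    _ ≤ ∑ i ∈ Finset.range k, ∫ x in (i : ℝ)..(i + 1 : ℕ), D x * w x :=
        Finset.sum_le_sum fun i _ => hpieces i
    _ = ∫ x in (0 : ℝ)..k, D x * w x := by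
        simpa using intervalIntegral.sum_integral_adjacent_intervals (a := fun i : ℕ => (i : ℝ))
          fun i _ => (hD.mul hw).intervalIntegrable _ _

lemma Function.Periodic.eventually_integral_mul_gaussian_pos
    (hper : Function.Periodic D 1) (hD : Continuous D) (hmean : 0 < ∫ x in (0 : ℝ)..1, D x) :
    ∀ᶠ a in 𝓝[>] 0, 0 < ∫ x, D x * Real.exp (-a * x ^ 2) := by
  set E : ℝ → ℝ := fun x => D x + D (-x)
  have hE : Continuous E := by fun_prop
  have hEper : Function.Periodic E 1 := fun x => by
    simp only [E, hper x, neg_add, ← sub_eq_add_neg, hper.sub_eq]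
  have hEmean : ∫ x in (0 : ℝ)..1, E x = 2 * ∫ x in (0 : ℝ)..1, D x := by
    rw [intervalIntegral.integral_add (f := D) (g := fun x => D (-x)) (hD.intervalIntegrable _ _)
      ((hD.comp continuous_neg).intervalIntegrable _ _), hper.intervalIntegral_comp_neg, two_mul]
  obtain ⟨M, hM⟩ := hEper.exists_abs_le hE
  obtain ⟨n, hn⟩ := exists_nat_gt (M / (2 * ∫ x in (0 : ℝ)..1, D x))
  set lower : ℝ → ℝ := fun a =>
    (2 * ∫ x in (0 : ℝ)..1, D x) * ∑ i ∈ Finset.range n, Real.exp (-a * (i + 1) ^ 2) - M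
  have hlower : ∀ᶠ a in 𝓝 0, 0 < lower a := by
    refine continuousAt_const.eventually_lt (show Continuous lower by fun_prop).continuousAt ?_
    simp only [lower, neg_zero, zero_mul, Real.exp_zero, Finset.sum_const, Finset.card_range,
      nsmul_eq_mul, mul_one]
    rw [div_lt_iff₀ (by positivity)] at hn
    linarith
  filter_upwards [nhdsWithin_le_nhds hlower, self_mem_nhdsWithin] with a hpos ha
  have ha : 0 < a := ha
  have hfold : ∀ x, D x * Real.exp (-a * x ^ 2) + D (-x) * Real.exp (-a * (-x) ^ 2)
      = E x * Real.exp (-a * x ^ 2) := fun x => by simp only [E, neg_sq]; ring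
  rw [integral_eq_integral_Ioi_add_comp_neg (hper.integrable_mul_gaussian hD ha)]
  simp only [hfold]
  refine hpos.trans_le (le_of_eq_of_le ?_ (hEper.le_integral_Ioi_mul_of_antitoneOn hE hM
    (hEmean ▸ by positivity) (by fun_prop) (antitoneOn_exp_neg_mul_sq ha.le)
    (fun x => (Real.exp_pos _).le) (hEper.integrable_mul_gaussian hE ha).integrableOn n))
  simp [lower, hEmean]

end Periodic

lemma eventually_integral_norm_mul_gaussian_rpow_lt {u v : ℝ → ℂ} (hu : Continuous u)
    (hv : Continuous v) (hu1 : Function.Periodic u 1) (hv1 : Function.Periodic v 1) {p : ℝ}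
    (hp : 0 < p) (h : ∫ x in (0 : ℝ)..1, ‖v x‖ ^ p < ∫ x in (0 : ℝ)..1, ‖u x‖ ^ p) :
    ∀ᶠ lam in 𝓝[>] 0, ∫ x, ‖v x * (Real.exp (-(lam * x ^ 2)) : ℂ)‖ ^ p
      < ∫ x, ‖u x * (Real.exp (-(lam * x ^ 2)) : ℂ)‖ ^ p := by
  have hnorm : ∀ (h : ℝ → ℂ) (lam x : ℝ), ‖h x * (Real.exp (-(lam * x ^ 2)) : ℂ)‖ ^ p
      = ‖h x‖ ^ p * Real.exp (-(lam * p) * x ^ 2) := fun h lam x => by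
    rw [norm_mul, norm_real, Real.norm_of_nonneg (Real.exp_pos _).le,
      Real.mul_rpow (norm_nonneg _) (Real.exp_pos _).le, ← Real.exp_mul]
    ring_nf
  have hu' : Continuous fun x => ‖u x‖ ^ p := hu.norm.rpow_const fun _ => Or.inr hp.le
  have hv' : Continuous fun x => ‖v x‖ ^ p := hv.norm.rpow_const fun _ => Or.inr hp.le
  have hu1' : Function.Periodic (fun x => ‖u x‖ ^ p) 1 := fun x => by simp only [hu1 x]
  have hv1' : Function.Periodic (fun x => ‖v x‖ ^ p) 1 := fun x => by simp only [hv1 x]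
  have hmean : 0 < ∫ x in (0 : ℝ)..1, (‖u x‖ ^ p - ‖v x‖ ^ p) := by
    rw [intervalIntegral.integral_sub (hu'.intervalIntegrable _ _) (hv'.intervalIntegrable _ _)]
    linarith
  have hscale : Filter.Tendsto (fun lam => lam * p) (𝓝[>] 0) (𝓝[>] 0) :=
    tendsto_nhdsWithin_of_tendsto_nhds_of_eventually_within _
      (((continuous_mul_const p).tendsto' 0 0 (zero_mul p)).mono_left nhdsWithin_le_nhds)
      (eventually_nhdsWithin_of_forall fun lam hlam => mul_pos hlam hp)
  filter_upwards [hscale.eventually ((hu1'.sub hv1').eventually_integral_mul_gaussian_pos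
    (hu'.sub hv') hmean), self_mem_nhdsWithin] with lam hpos hlam
  have hlamp : 0 < lam * p := mul_pos hlam hp
  have hpos : 0 < ∫ x, (‖u x‖ ^ p - ‖v x‖ ^ p) * Real.exp (-(lam * p) * x ^ 2) := hpos
  simp only [hnorm]
  rw [← sub_pos, ← integral_sub (hu1'.integrable_mul_gaussian hu' hlamp)
    (hv1'.integrable_mul_gaussian hv' hlamp)]
  simpa only [sub_mul] using hpos

theorem ump_failure_transfers_to_real_line_general
    (p : ℝ) (hp : 2 < p)
    (K : ℕ) (a : ℤ → ℂ) (b : ℤ → ℝ)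
    (hab : ∀ k : ℤ, ‖a k‖ ≤ b k)
    (q Q : ℝ → ℂ)
    (hq : ∀ x : ℝ, q x = ∑ k ∈ Finset.Icc (-(K : ℤ)) (K : ℤ),
      a k * Complex.exp (((2 * Real.pi * (k : ℝ) * x : ℝ) : ℂ) * Complex.I))
    (hQ : ∀ x : ℝ, Q x = ∑ k ∈ Finset.Icc (-(K : ℤ)) (K : ℤ),
      ((b k : ℝ) : ℂ) * Complex.exp (((2 * Real.pi * (k : ℝ) * x : ℝ) : ℂ) * Complex.I))
    (hgt : (∫ x in (0 : ℝ)..1, ‖Q x‖ ^ p) ^ (1 / p) < (∫ x in (0 : ℝ)..1, ‖q x‖ ^ p) ^ (1 / p)) :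
    ∃ lam₀ : ℝ, 0 < lam₀ ∧ ∀ lam : ℝ, 0 < lam → lam < lam₀ →
      ∃ f g : SchwartzMap ℝ ℂ,
        (∀ x : ℝ, f x = q x * (↑(Real.exp (-(lam * x ^ 2))) : ℂ)) ∧
        (∀ x : ℝ, g x = Q x * (↑(Real.exp (-(lam * x ^ 2))) : ℂ)) ∧
        (∀ ξ : ℝ, ‖𝓕 (⇑f) ξ‖ ≤ (𝓕 (⇑g) ξ).re ∧ (𝓕 (⇑g) ξ).im = 0) ∧
        (∫ x : ℝ, ‖g x‖ ^ p) ^ (1 / p) < (∫ x : ℝ, ‖f x‖ ^ p) ^ (1 / p) := by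
  set s := Finset.Icc (-(K : ℤ)) K
  obtain rfl : q = trigPoly a s := funext hq
  obtain rfl : Q = trigPoly (fun k => (b k : ℂ)) s := funext hQ
  have hp0 : 0 < p := by linarith
  have hlt := (Real.rpow_lt_rpow_iff
    (intervalIntegral.integral_nonneg zero_le_one fun _ _ => by positivity)
    (intervalIntegral.integral_nonneg zero_le_one fun _ _ => by positivity)
    (one_div_pos.mpr hp0)).mp hgt
  obtain ⟨lam₀, hlam₀, hsub⟩ := mem_nhdsGT_iff_exists_Ioo_subset.mp
    (eventually_integral_norm_mul_gaussian_rpow_lt (trigPoly_hasTemperateGrowth _ s).1.continuous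
      (trigPoly_hasTemperateGrowth _ s).1.continuous (trigPoly_periodic a s)
      (trigPoly_periodic _ s) hp0 hlt)
  refine ⟨lam₀, hlam₀, fun lam hlam hlam_lt => ?_⟩
  obtain ⟨f, hf⟩ := exists_schwartzMap_eq_mul_gaussian (trigPoly_hasTemperateGrowth a s) hlam
  obtain ⟨g, hg⟩ :=
    exists_schwartzMap_eq_mul_gaussian (trigPoly_hasTemperateGrowth (fun k => (b k : ℂ)) s) hlam
  refine ⟨f, g, hf, hg, fun ξ => ?_, ?_⟩
  · rw [funext hf, funext hg]
    exact norm_fourier_trigPoly_mul_gaussian_le s hab hlam ξ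
  · simp only [hf, hg]
    exact Real.rpow_lt_rpow (integral_nonneg fun _ => by positivity) (hsub ⟨hlam, hlam_lt⟩)
      (one_div_pos.mpr hp0)

/-- Failure of the upper majorant property transfers from the torus to the line:
given trigonometric polynomials `q, Q` with `|a_k| ≤ b_k`, `b_k ≥ 0` and
`‖q‖_{L^p(0,1)} > ‖Q‖_{L^p(0,1)}` for some non-trivial exponent `p > 2`, the Schwartz
functions `f = q e^{-λx²}`, `g = Q e^{-λx²}` satisfy `|f̂| ≤ ĝ` pointwise but
`‖f‖_{L^p(ℝ)} > ‖g‖_{L^p(ℝ)}`, for all sufficiently small `λ > 0`. -/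
theorem ump_failure_transfers_to_real_line
    (p : ℝ) (hp : 2 < p)
    (K : ℕ) (a : ℤ → ℂ) (b : ℤ → ℝ)
    (hb : ∀ k : ℤ, 0 ≤ b k) (hab : ∀ k : ℤ, ‖a k‖ ≤ b k)
    (q Q : ℝ → ℂ)
    (hq : ∀ x : ℝ, q x = ∑ k ∈ Finset.Icc (-(K : ℤ)) (K : ℤ),
      a k * Complex.exp (((2 * Real.pi * (k : ℝ) * x : ℝ) : ℂ) * Complex.I))
    (hQ : ∀ x : ℝ, Q x = ∑ k ∈ Finset.Icc (-(K : ℤ)) (K : ℤ),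
      ((b k : ℝ) : ℂ) * Complex.exp (((2 * Real.pi * (k : ℝ) * x : ℝ) : ℂ) * Complex.I))
    (hgt : (∫ x in (0 : ℝ)..1, ‖Q x‖ ^ p) ^ (1 / p) < (∫ x in (0 : ℝ)..1, ‖q x‖ ^ p) ^ (1 / p)) :
    ∃ lam₀ : ℝ, 0 < lam₀ ∧ ∀ lam : ℝ, 0 < lam → lam < lam₀ →
      ∃ f g : SchwartzMap ℝ ℂ,
        (∀ x : ℝ, f x = q x * (↑(Real.exp (-(lam * x ^ 2))) : ℂ)) ∧
        (∀ x : ℝ, g x = Q x * (↑(Real.exp (-(lam * x ^ 2))) : ℂ)) ∧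
        (∀ ξ : ℝ, ‖𝓕 (⇑f) ξ‖ ≤ (𝓕 (⇑g) ξ).re ∧ (𝓕 (⇑g) ξ).im = 0) ∧
        (∫ x : ℝ, ‖g x‖ ^ p) ^ (1 / p) < (∫ x : ℝ, ‖f x‖ ^ p) ^ (1 / p) :=
  ump_failure_transfers_to_real_line_general p hp K a b hab q Q hq hQ hgt
end
end

section
/- Let n ≥ 1, σ ∈ ℕ with σ ≥ 1, let q : ℝⁿ → ℝ be continuous with q(ξ) > 0 for all ξ, and let u : ℝⁿ → [0, ∞) be a continuous nonnegative function, not identically zero, which is real-analytic on ℝⁿ, such that the (2σ+1)-fold convolution (u ∗ u ∗ ⋯ ∗ u)(ξ) (with 2σ+1 factors) is finite for every ξ and u(ξ) = (1/q(ξ)) (u ∗ u ∗ ⋯ ∗ u)(ξ) for all ξ ∈ ℝⁿ. Then u(ξ) > 0 for every ξ ∈ ℝⁿ; in particular the set Ω = { ξ ∈ ℝⁿ : u(ξ) > 0 } equals ℝⁿ and is connected. -/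
open MeasureTheory

noncomputable section

/-- Euclidean space `ℝⁿ`. -/
abbrev Rn (n : ℕ) := EuclideanSpace ℝ (Fin n)

/-- `convPow u k` is the `(k+1)`-fold convolution power `u ∗ u ∗ ⋯ ∗ u` (with `k+1`
factors). -/
def convPow (n : ℕ) (u : Rn n → ℝ) : ℕ → Rn n → ℝ
  | 0 => u
  | (k + 1) => fun ξ => ∫ y : Rn n, convPow n u k (ξ - y) * u y

/-!
If nonnegative `f` and `g` are positive on open sets `V` and `W`, then `f ∗ g` is positive on
`V + W`, since the integrand is positive on a nonempty open set. With `W = {u > 0}`, nonempty and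
open, each convolution power `u ∗ ⋯ ∗ u` is therefore positive on a nonempty open set `V`. If
`u(ξ₀) = 0`, then `u = (1/q)(u ∗ ⋯ ∗ u)` with `q > 0` forces `(u ∗ ⋯ ∗ u)(ξ₀) = 0`, so
`ξ₀ ∉ V + W`: `u` vanishes on the open set `ξ₀ - V`, and by analyticity `u ≡ 0`.
-/

open Pointwise Set Topology

theorem integral_mul_sub_pos_of_mem_add {G : Type*} [AddCommGroup G] [TopologicalSpace G]
    [ContinuousSub G] [MeasurableSpace G] (μ : Measure G) [μ.IsOpenPosMeasure]
    {f g : G → ℝ} (hf : 0 ≤ f) (hg : 0 ≤ g) {V W : Set G} (hV : IsOpen V) (hW : IsOpen W)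
    (hfV : ∀ x ∈ V, 0 < f x) (hgW : ∀ y ∈ W, 0 < g y) {ξ : G} (hξ : ξ ∈ V + W)
    (hint : Integrable (fun y => f (ξ - y) * g y) μ) :
    0 < ∫ y, f (ξ - y) * g y ∂μ := by
  obtain ⟨v, hv, w, hw, rfl⟩ := hξ
  have hopen : IsOpen ((fun y => v + w - y) ⁻¹' V ∩ W) :=
    (hV.preimage (by fun_prop)).inter hW
  have hne : ((fun y => v + w - y) ⁻¹' V ∩ W).Nonempty := ⟨w, by simpa using hv, hw⟩
  rw [integral_pos_iff_support_of_nonneg (fun y => mul_nonneg (hf _) (hg _)) hint]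
  refine (hopen.measure_pos μ hne).trans_le (measure_mono ?_)
  rintro y ⟨hyV, hyW⟩
  exact (mul_pos (hfV _ hyV) (hgW y hyW)).ne'

section ConvPow

variable {n : ℕ} {u : Rn n → ℝ}

theorem convPow_nonneg (hu : 0 ≤ u) : ∀ k, 0 ≤ convPow n u k
  | 0 => hu
  | k + 1 => fun _ => integral_nonneg fun y => mul_nonneg (convPow_nonneg hu k _) (hu y)

theorem convPow_succ_pos_of_mem_add (hu : 0 ≤ u) {k : ℕ} {V W : Set (Rn n)} (hV : IsOpen V)
    (hW : IsOpen W) (hkV : ∀ x ∈ V, 0 < convPow n u k x) (huW : ∀ y ∈ W, 0 < u y)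
    {ξ : Rn n} (hξ : ξ ∈ V + W) (hint : Integrable fun y => convPow n u k (ξ - y) * u y) :
    0 < convPow n u (k + 1) ξ :=
  integral_mul_sub_pos_of_mem_add volume (convPow_nonneg hu k) hu hV hW hkV huW hξ hint

theorem exists_isOpen_nonempty_convPow_pos (huc : Continuous u) (hu : 0 ≤ u) (hne : u ≠ 0)
    {m : ℕ} (hint : ∀ k < m, ∀ ξ, Integrable fun y => convPow n u k (ξ - y) * u y) :
    ∀ k ≤ m, ∃ V : Set (Rn n), IsOpen V ∧ V.Nonempty ∧ ∀ x ∈ V, 0 < convPow n u k x := by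
  have hW : IsOpen {y | 0 < u y} := isOpen_lt continuous_const huc
  obtain ⟨a, ha⟩ := Function.ne_iff.mp hne
  have hWne : {y | 0 < u y}.Nonempty := ⟨a, (hu a).lt_of_ne' ha⟩
  intro k hk
  induction k with
  | zero => exact ⟨_, hW, hWne, fun _ hx => hx⟩
  | succ k ih =>
    obtain ⟨V, hV, hVne, hkV⟩ := ih (by omega)
    exact ⟨V + {y | 0 < u y}, hW.add_left, hVne.add hWne, fun ξ hξ =>
      convPow_succ_pos_of_mem_add hu hV hW hkV (fun _ hy => hy) hξ (hint k hk ξ)⟩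

theorem convPow_succ_pos (huc : Continuous u) (hu : 0 ≤ u) (hne : u ≠ 0)
    (huan : AnalyticOnNhd ℝ u univ) {m : ℕ}
    (hint : ∀ k ≤ m, ∀ ξ, Integrable fun y => convPow n u k (ξ - y) * u y) (ξ : Rn n) :
    0 < convPow n u (m + 1) ξ := by
  obtain ⟨V, hV, ⟨v, hv⟩, hmV⟩ := exists_isOpen_nonempty_convPow_pos huc hu hne
    (m := m + 1) (fun k hk => hint k (by omega)) m (by omega)
  refine (convPow_nonneg hu _ ξ).lt_of_ne' fun h0 => hne ?_
  have hvanish : ∀ y ∈ (fun y => ξ - y) ⁻¹' V, u y = 0 := by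
    intro y hy
    refine le_antisymm (not_lt.mp fun hpos => ?_) (hu y)
    have hξ : ξ ∈ V + {y | 0 < u y} := ⟨ξ - y, hy, y, hpos, sub_add_cancel ξ y⟩
    exact (convPow_succ_pos_of_mem_add hu hV (isOpen_lt continuous_const huc) hmV
      (fun _ h => h) hξ (hint m le_rfl ξ)).ne' h0
  have hnhds : (fun y => ξ - y) ⁻¹' V ∈ 𝓝 (ξ - v) :=
    (hV.preimage (by fun_prop)).mem_nhds (by simpa using hv)
  funext x
  exact huan.eqOn_zero_of_preconnected_of_eventuallyEq_zero isPreconnected_univ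
    (mem_univ (ξ - v)) (Filter.eventually_of_mem hnhds hvanish) (mem_univ x)

end ConvPow

theorem positivity_of_fourier_transform_of_ground_state_general
    (n : ℕ) (σ : ℕ) (hσ : 1 ≤ σ)
    (q : Rn n → ℝ) (hqpos : ∀ ξ : Rn n, 0 < q ξ)
    (u : Rn n → ℝ) (huc : Continuous u) (hunonneg : ∀ ξ : Rn n, 0 ≤ u ξ)
    (hune : ∃ ξ : Rn n, u ξ ≠ 0)
    (huan : ∀ ξ : Rn n, AnalyticAt ℝ u ξ)
    (hint : ∀ k : ℕ, k < 2 * σ → ∀ ξ : Rn n,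
      Integrable (fun y : Rn n => convPow n u k (ξ - y) * u y))
    (heq : ∀ ξ : Rn n, u ξ = (1 / q ξ) * convPow n u (2 * σ) ξ) :
    (∀ ξ : Rn n, 0 < u ξ) ∧ {ξ : Rn n | 0 < u ξ} = Set.univ ∧
      IsConnected {ξ : Rn n | 0 < u ξ} := by
  have hne : u ≠ 0 := fun h => hune.elim fun ξ hξ => hξ (congrFun h ξ)
  have hpos : ∀ ξ, 0 < u ξ := fun ξ => by
    rw [heq ξ, show 2 * σ = 2 * σ - 1 + 1 by omega]
    exact mul_pos (one_div_pos.mpr (hqpos ξ)) (convPow_succ_pos huc hunonneg hne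
      (fun ξ _ => huan ξ) (fun k hk => hint k (by omega)) ξ)
  have hset : {ξ | 0 < u ξ} = Set.univ := eq_univ_of_forall hpos
  exact ⟨hpos, hset, hset ▸ isConnected_univ⟩

/-- Lemma 4.1 in Fourier-side form: if a nonnegative, continuous, real-analytic,
not identically vanishing function `u` satisfies `u = (1/q) (u ∗ ⋯ ∗ u)` (with `2σ+1`
convolution factors) for a continuous strictly positive `q`, then `u > 0` everywhere;
in particular `Ω = {u > 0}` equals `ℝⁿ` and is connected. -/
theorem positivity_of_fourier_transform_of_ground_state
    (n : ℕ) (hn : 1 ≤ n) (σ : ℕ) (hσ : 1 ≤ σ)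
    (q : Rn n → ℝ) (hqc : Continuous q) (hqpos : ∀ ξ : Rn n, 0 < q ξ)
    (u : Rn n → ℝ) (huc : Continuous u) (hunonneg : ∀ ξ : Rn n, 0 ≤ u ξ)
    (hune : ∃ ξ : Rn n, u ξ ≠ 0)
    (huan : ∀ ξ : Rn n, AnalyticAt ℝ u ξ)
    (hint : ∀ k : ℕ, k < 2 * σ → ∀ ξ : Rn n,
      Integrable (fun y : Rn n => convPow n u k (ξ - y) * u y))
    (heq : ∀ ξ : Rn n, u ξ = (1 / q ξ) * convPow n u (2 * σ) ξ) :
    (∀ ξ : Rn n, 0 < u ξ) ∧ {ξ : Rn n | 0 < u ξ} = Set.univ ∧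
      IsConnected {ξ : Rn n | 0 < u ξ} :=
  positivity_of_fourier_transform_of_ground_state_general n σ hσ q hqpos u huc hunonneg hune huan
    hint heq
end
end
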